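/- arXiv:2106.13692 — 5 statements merged into one kernel-verified Lean document; each statement's English description precedes it below -/
import Mathlib

section
/- Suppose t_1,…,t_{m-1} ∈ (0,1), t_m = 1, and weights w_1,…,w_m > 0 give a quadrature rule exact for all polynomials of degree up to 2m-2 on [0,1] (Gauss-Radau with endpoint 1). Then r_m(x) := Σ_{i=1}^m w_i (x-1)/(t_i(x-1)+1) satisfies ln(x) - r_m(x) = O((x-1)^{2m}) as x → 1; more precisely, for |x-1| < min_i 1/t_i, the power series of ln(x) - r_m(x) around x = 1 has vanishing coefficients for all powers (x-1)^k with k ≤ 2m-1. -/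
/-!
Expanding both sides around `x = 1` with `y = x - 1`, the coefficient of `y ^ (k + 1)` in
`log x - r_m(x)` is `(-1) ^ k * (∫₀¹ s ^ k ds - ∑ i, w i * t i ^ k)`: the logarithm contributes
`(-1) ^ k / (k + 1)` and each partial fraction a geometric series in `-t i * y`. This is the
quadrature error on the monomial `s ^ k`, which vanishes for `k ≤ 2 * m - 2`.
-/

open Real

theorem Real.hasSum_log_one_add_of_abs_lt_one {y : ℝ} (hy : |y| < 1) :
    HasSum (fun k : ℕ => (-1) ^ k * y ^ (k + 1) / (k + 1)) (log (1 + y)) := by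
  have h := (hasSum_pow_div_log_of_abs_lt_one (x := -y) (by rwa [abs_neg])).neg
  rw [neg_neg, sub_neg_eq_add] at h
  refine h.congr_fun fun k => ?_
  rw [neg_pow, pow_succ, ← neg_div]
  ring

theorem hasSum_div_mul_add_one {t y : ℝ} (hty : |t * y| < 1) :
    HasSum (fun k : ℕ => (-1) ^ k * t ^ k * y ^ (k + 1)) (y / (t * y + 1)) := by
  have h := (hasSum_geometric_of_abs_lt_one (r := -(t * y)) (by rwa [abs_neg])).mul_left y
  rw [sub_neg_eq_add, add_comm, ← div_eq_mul_inv] at h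
  refine h.congr_fun fun k => ?_
  rw [neg_pow (t * y), mul_pow]
  ring

theorem hasSum_log_one_add_sub_sum_div {ι : Type*} [Fintype ι] (w t : ι → ℝ) {y : ℝ}
    (hy : |y| < 1) (hty : ∀ i, |t i * y| < 1) :
    HasSum (fun k : ℕ => (-1) ^ k * (1 / (k + 1) - ∑ i, w i * t i ^ k) * y ^ (k + 1))
      (log (1 + y) - ∑ i, w i * (y / (t i * y + 1))) := by
  have h := (hasSum_log_one_add_of_abs_lt_one hy).sub
    (hasSum_sum (s := Finset.univ) fun i _ => (hasSum_div_mul_add_one (hty i)).mul_left (w i))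
  refine h.congr_fun fun k => ?_
  simp only [mul_sub, sub_mul, Finset.mul_sum, Finset.sum_mul]
  congr 1
  · ring
  · exact Finset.sum_congr rfl fun i _ => by ring

theorem sum_mul_pow_eq_of_integral_eq_sum {ι : Type*} [Fintype ι] {w t : ι → ℝ} {N : ℕ}
    (hquad : ∀ p : Polynomial ℝ, p.natDegree ≤ N →
      ∫ s in (0:ℝ)..1, p.eval s = ∑ i, w i * p.eval (t i))
    {k : ℕ} (hk : k ≤ N) :
    ∑ i, w i * t i ^ k = 1 / (k + 1) := by
  have h := hquad (Polynomial.X ^ k) (by simpa using hk)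
  simp only [Polynomial.eval_pow, Polynomial.eval_X, integral_pow] at h
  rw [← h]
  simp

theorem stmt_4_general (m : ℕ) (t w : Fin m → ℝ)
    (ht : ∀ i, t i ∈ Set.Ioc (0:ℝ) 1) (htop : ∃ i, t i = 1)
    (hquad : ∀ p : Polynomial ℝ, p.natDegree ≤ 2 * m - 2 →
      ∫ s in (0:ℝ)..1, p.eval s = ∑ i, w i * p.eval (t i)) :
    ∃ c : ℕ → ℝ, (∀ k, k ≤ 2 * m - 1 → c k = 0) ∧
      ∀ x : ℝ, (∀ i, |x - 1| * t i < 1) →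
        HasSum (fun k => c k * (x - 1) ^ k)
          (Real.log x - ∑ i, w i * ((x - 1) / (t i * (x - 1) + 1))) := by
  refine ⟨fun | 0 => 0 | k + 1 => (-1) ^ k * (1 / (k + 1) - ∑ i, w i * t i ^ k), ?_, ?_⟩
  · rintro (_ | k) hk
    · rfl
    · simp [sum_mul_pow_eq_of_integral_eq_sum hquad (k := k) (by omega)]
  · intro x hx
    obtain ⟨i₀, hi₀⟩ := htop
    have hy : |x - 1| < 1 := by simpa [hi₀] using hx i₀
    have hty : ∀ i, |t i * (x - 1)| < 1 := fun i => by
      rw [abs_mul, abs_of_pos (ht i).1, mul_comm]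
      exact hx i
    have h := hasSum_log_one_add_sub_sum_div w t hy hty
    rw [add_sub_cancel] at h
    exact (hasSum_nat_add_iff' 1).mp (by simpa using h)

theorem stmt_4 (m : ℕ) (hm : 0 < m) (t w : Fin m → ℝ)
    (ht : ∀ i, t i ∈ Set.Ioc (0:ℝ) 1) (htop : ∃ i, t i = 1) (hw : ∀ i, 0 < w i)
    (hquad : ∀ p : Polynomial ℝ, p.natDegree ≤ 2 * m - 2 →
      ∫ s in (0:ℝ)..1, p.eval s = ∑ i, w i * p.eval (t i)) :
    ∃ c : ℕ → ℝ, (∀ k, k ≤ 2 * m - 1 → c k = 0) ∧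
      ∀ x : ℝ, (∀ i, |x - 1| * t i < 1) →
        HasSum (fun k => c k * (x - 1) ^ k)
          (Real.log x - ∑ i, w i * ((x - 1) / (t i * (x - 1) + 1))) :=
  stmt_4_general m t w ht htop hquad
end

section
/- Let A, B be commuting positive semidefinite operators on a finite-dimensional complex inner product space H, and suppose A+B is invertible. Then for any vector x ∈ H, ⟨x, (A:B)x⟩ = min over all decompositions y + z = x of ⟨y, Ay⟩ + ⟨z, Bz⟩, where A:B := A(A+B)^{-1}B is the parallel sum; moreover, for any y,z with y+z=x, ⟨x,(A:B)x⟩ = ⟨y,Ay⟩ + ⟨z,Bz⟩ − ⟨u,(A+B)u⟩ where u = (A+B)^{-1}Bx − y. -/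
/-!
Put `S = A + B` and `w = S⁻¹ B x`. Since `A : B = B - B S⁻¹ B`, expanding `u* S u` for the defect
`u = w - y` of a splitting `x = y + z` gives `x* (A : B) x = y* A y + z* B z - u* S u`. As `S` is
positive semidefinite, the right side is at least `x* (A : B) x`, with equality at `y = w`.
-/

open Matrix ComplexOrder

namespace Matrix

variable {m R : Type*} [Fintype m] [CommRing R] [StarRing R]

theorem IsHermitian.star_mulVec_dotProduct {M : Matrix m m R} (hM : M.IsHermitian)
    (v w : m → R) : star (M *ᵥ v) ⬝ᵥ w = star v ⬝ᵥ (M *ᵥ w) := by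
  rw [star_mulVec, hM.eq, dotProduct_mulVec]

variable [DecidableEq m]

noncomputable def parallelSum (A B : Matrix m m R) : Matrix m m R :=
  A * (A + B)⁻¹ * B

omit [StarRing R] in
theorem parallelSum_eq_sub {A B : Matrix m m R} (h : IsUnit (A + B).det) :
    parallelSum A B = B - B * (A + B)⁻¹ * B :=
  calc parallelSum A B = ((A + B) - B) * (A + B)⁻¹ * B := by
        rw [parallelSum, add_sub_cancel_right]
    _ = B - B * (A + B)⁻¹ * B := by
        rw [sub_mul, sub_mul, mul_nonsing_inv _ h, one_mul]

theorem dotProduct_parallelSum_mulVec_eq {A B : Matrix m m R} (hB : B.IsHermitian)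
    (hAB : (A + B).IsHermitian) (h : IsUnit (A + B).det) {x : m → R} (y z : m → R)
    (hyz : y + z = x) :
    star x ⬝ᵥ (parallelSum A B *ᵥ x) =
      star y ⬝ᵥ (A *ᵥ y) + star z ⬝ᵥ (B *ᵥ z)
        - star ((A + B)⁻¹ *ᵥ (B *ᵥ x) - y) ⬝ᵥ ((A + B) *ᵥ ((A + B)⁻¹ *ᵥ (B *ᵥ x) - y)) := by
  obtain rfl : z = x - y := by rw [← hyz, add_sub_cancel_left]
  have hinv : (A + B) *ᵥ ((A + B)⁻¹ *ᵥ (B *ᵥ x)) = B *ᵥ x := by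
    rw [mulVec_mulVec, mul_nonsing_inv _ h, one_mulVec]
  have hinv' : (A + B)⁻¹ *ᵥ ((A + B) *ᵥ y) = y := by
    rw [mulVec_mulVec, nonsing_inv_mul _ h, one_mulVec]
  rw [parallelSum_eq_sub h, mulVec_sub (A + B), hinv]
  simp only [sub_mulVec, mulVec_sub, ← mulVec_mulVec, dotProduct_sub, sub_dotProduct, star_sub,
    hB.star_mulVec_dotProduct, hAB.inv.star_mulVec_dotProduct, hinv']
  simp only [add_mulVec, dotProduct_add]
  ring

theorem dotProduct_parallelSum_mulVec_le [PartialOrder R] [AddLeftMono R] {A B : Matrix m m R}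
    (hB : B.IsHermitian) (hAB : (A + B).PosSemidef) (h : IsUnit (A + B).det) {x : m → R}
    (y z : m → R) (hyz : y + z = x) :
    star x ⬝ᵥ (parallelSum A B *ᵥ x) ≤ star y ⬝ᵥ (A *ᵥ y) + star z ⬝ᵥ (B *ᵥ z) := by
  rw [dotProduct_parallelSum_mulVec_eq hB hAB.isHermitian h y z hyz]
  exact sub_le_self _ (hAB.dotProduct_mulVec_nonneg _)

end Matrix

theorem stmt_6_general {n : ℕ} (A B : Matrix (Fin n) (Fin n) ℂ)
    (hA : A.PosSemidef) (hB : B.PosSemidef)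
    (hinv : IsUnit (A + B)) (x : Fin n → ℂ) :
    (∀ y z : Fin n → ℂ, y + z = x →
      star x ⬝ᵥ ((A * (A + B)⁻¹ * B) *ᵥ x) =
        star y ⬝ᵥ (A *ᵥ y) + star z ⬝ᵥ (B *ᵥ z)
          - star ((A + B)⁻¹ *ᵥ (B *ᵥ x) - y) ⬝ᵥ
              ((A + B) *ᵥ ((A + B)⁻¹ *ᵥ (B *ᵥ x) - y))) ∧
    IsLeast {v : ℝ | ∃ y z : Fin n → ℂ, y + z = x ∧
        v = (star y ⬝ᵥ (A *ᵥ y) + star z ⬝ᵥ (B *ᵥ z)).re}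
      ((star x ⬝ᵥ ((A * (A + B)⁻¹ * B) *ᵥ x)).re) := by
  have hAB := hA.add hB
  have hdet := (isUnit_iff_isUnit_det _).mp hinv
  have key := dotProduct_parallelSum_mulVec_eq hB.isHermitian hAB.isHermitian hdet (x := x)
  set w := (A + B)⁻¹ *ᵥ (B *ᵥ x)
  refine ⟨key, ⟨w, x - w, add_sub_cancel w x, ?_⟩, ?_⟩
  · show (star x ⬝ᵥ (parallelSum A B *ᵥ x)).re = _
    rw [key w (x - w) (add_sub_cancel w x), sub_self, mulVec_zero, dotProduct_zero, sub_zero]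
  · rintro _ ⟨y, z, hyz, rfl⟩
    exact (Complex.le_def.mp (dotProduct_parallelSum_mulVec_le hB.isHermitian hAB hdet y z hyz)).1

theorem stmt_6 {n : ℕ} (A B : Matrix (Fin n) (Fin n) ℂ)
    (hA : A.PosSemidef) (hB : B.PosSemidef) (hcomm : A * B = B * A)
    (hinv : IsUnit (A + B)) (x : Fin n → ℂ) :
    (∀ y z : Fin n → ℂ, y + z = x →
      star x ⬝ᵥ ((A * (A + B)⁻¹ * B) *ᵥ x) =
        star y ⬝ᵥ (A *ᵥ y) + star z ⬝ᵥ (B *ᵥ z)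
          - star ((A + B)⁻¹ *ᵥ (B *ᵥ x) - y) ⬝ᵥ
              ((A + B) *ᵥ ((A + B)⁻¹ *ᵥ (B *ᵥ x) - y))) ∧
    IsLeast {v : ℝ | ∃ y z : Fin n → ℂ, y + z = x ∧
        v = (star y ⬝ᵥ (A *ᵥ y) + star z ⬝ᵥ (B *ᵥ z)).re}
      ((star x ⬝ᵥ ((A * (A + B)⁻¹ * B) *ᵥ x)).re) :=
  stmt_6_general A B hA hB hinv x
end

section
/- Let t ∈ (0,1) and let ρ, σ be positive semidefinite matrices on a finite-dimensional Hilbert space with ρ ≤ λσ. Then the operator equation (1-t) Z ρ + t σ Z = ρ has a solution Z with operator norm ‖Z‖ ≤ max( 3/(2(1-t)), 3λ/(2t) ). -/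
/-!
Diagonalize `ρ = V diag(r) V*` and `σ = W diag(s) W*`. In these bases the equation decouples
entrywise, and `Z = W M V*` with `M j i = G j i * r i / ((1 - t) r i + t s j)`, `G = W* V`.
For the norm, write `1 / (a + b) = ∫₀^∞ e^{-aτ} e^{-bτ} dτ`: then `⟪x, M y⟫` is the integral of
`⟪e^{-tτ diag s} x, G diag(r) e^{-(1-t)τ diag r} y⟫`. Bounding this pointwise by AM-GM and using
`G diag(r) G* ≤ λ diag(s)` (which is `ρ ≤ λσ` read in the basis `W`), the integrals of the two
squares are at most `λ ‖x‖² / 2t` and `‖y‖² / 2(1-t)`, whence `‖Z‖ ≤ max (1 / 2(1-t)) (λ / 2t)`.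
-/

open Matrix ComplexOrder MeasureTheory

lemma mul_add_mul_pos_or_eq_zero {α β a b : ℝ} (hα : 0 < α) (hβ : 0 ≤ β) (ha : 0 ≤ a)
    (hb : 0 ≤ b) : 0 < α * a + β * b ∨ a = 0 := by
  rcases ha.eq_or_lt with h | h
  · exact Or.inr h.symm
  · exact Or.inl (by positivity)

lemma integrableOn_mul_exp_neg_mul {w d : ℝ} (h : 0 < d ∨ w = 0) :
    IntegrableOn (fun τ => w * Real.exp (-d * τ)) (Set.Ioi 0) := by
  rcases h with hd | rfl
  · exact (integrableOn_exp_mul_Ioi (neg_neg_of_pos hd) 0).const_mul w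
  · simp

lemma integral_mul_exp_neg_mul {w d : ℝ} (h : 0 < d ∨ w = 0) :
    ∫ τ in Set.Ioi 0, w * Real.exp (-d * τ) = w / d := by
  rcases h with hd | rfl
  · rw [integral_const_mul, integral_exp_mul_Ioi (neg_neg_of_pos hd)]
    field_simp
    simp
  · simp

lemma integrableOn_sum_mul_exp_neg_and_integral_le {ι : Type*} [Fintype ι] {w c : ι → ℝ}
    {γ : ℝ} (hw : 0 ≤ w) (hc : 0 ≤ c) (hγ : 0 < γ) :
    IntegrableOn (fun τ => ∑ k, w k * (c k * Real.exp (-(γ * c k) * τ))) (Set.Ioi 0) ∧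
      ∫ τ in Set.Ioi 0, ∑ k, w k * (c k * Real.exp (-(γ * c k) * τ)) ≤ (∑ k, w k) / γ := by
  have hdecay : ∀ k, 0 < γ * c k ∨ c k = 0 := fun k =>
    (hc k).eq_or_lt.symm.imp (mul_pos hγ) Eq.symm
  have hint : ∀ k, IntegrableOn (fun τ => w k * (c k * Real.exp (-(γ * c k) * τ))) (Set.Ioi 0) :=
    fun k => (integrableOn_mul_exp_neg_mul (hdecay k)).const_mul (w k)
  refine ⟨integrable_finsetSum _ fun k _ => hint k, ?_⟩
  rw [integral_finsetSum _ fun k _ => hint k, Finset.sum_div]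
  refine Finset.sum_le_sum fun k _ => ?_
  rw [integral_const_mul, integral_mul_exp_neg_mul (hdecay k), div_eq_mul_one_div (w k)]
  refine mul_le_mul_of_nonneg_left ?_ (hw k)
  rcases (hc k).eq_or_lt with h | h
  · simp [← h, hγ.le]
  · rw [mul_comm, ← div_div, div_self h.ne']

lemma norm_ofReal_exp_mul_sq (c τ : ℝ) (z : ℂ) :
    ‖(Real.exp (-c * τ) : ℂ) * z‖ ^ 2 = ‖z‖ ^ 2 * Real.exp (-(2 * c) * τ) := by
  rw [norm_mul, Complex.norm_real, Real.norm_of_nonneg (Real.exp_pos _).le, mul_pow,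
    ← Real.exp_nat_mul]
  ring_nf

theorem ContinuousLinearMap.opNorm_le_of_norm_inner_le {𝕜 E F : Type*} [RCLike 𝕜]
    [NormedAddCommGroup E] [InnerProductSpace 𝕜 E] [NormedAddCommGroup F] [InnerProductSpace 𝕜 F]
    (T : E →L[𝕜] F) {K : ℝ} (hK : 0 < K)
    (h : ∀ x y, ‖inner 𝕜 x (T y)‖ ≤ K * (‖x‖ ^ 2 + ‖y‖ ^ 2) / 2) : ‖T‖ ≤ K := by
  refine T.opNorm_le_bound hK.le fun y => ?_
  -- test the bound against `x = K⁻¹ • T y`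
  have hy := h ((K⁻¹ : 𝕜) • T y) y
  rw [inner_smul_left, inner_self_eq_norm_sq_to_K, norm_mul, norm_smul] at hy
  simp only [map_inv₀, RCLike.conj_ofReal, norm_inv, RCLike.norm_ofReal, abs_of_pos hK] at hy
  rw [norm_pow, RCLike.norm_ofReal, abs_norm] at hy
  have hK2 : ‖T y‖ ^ 2 ≤ (K * ‖y‖) ^ 2 := by
    have := mul_le_mul_of_nonneg_left hy (by positivity : (0:ℝ) ≤ 2 * K)
    field_simp at this
    nlinarith
  exact (pow_le_pow_iff_left₀ (norm_nonneg _) (by positivity) two_ne_zero).mp hK2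

section Matrix

variable {ι : Type*} [Fintype ι] [DecidableEq ι]

lemma star_dotProduct_conj_diagonal_mulVec (U : Matrix ι ι ℂ) (d : ι → ℝ) (v : ι → ℂ) :
    star v ⬝ᵥ ((U * diagonal (RCLike.ofReal ∘ d) * star U) *ᵥ v) =
      ((∑ i, d i * ‖(star U *ᵥ v) i‖ ^ 2 : ℝ) : ℂ) := by
  rw [star_eq_conjTranspose, ← mulVec_mulVec, ← mulVec_mulVec, dotProduct_mulVec,
    ← conjTranspose_conjTranspose U, ← star_mulVec, conjTranspose_conjTranspose]
  simp only [dotProduct, mulVec_diagonal, Function.comp_apply, Pi.star_apply, Complex.ofReal_sum,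
    Complex.ofReal_mul, Complex.ofReal_pow]
  refine Finset.sum_congr rfl fun i _ => ?_
  rw [mul_left_comm, RCLike.star_def, RCLike.conj_mul]
  rfl

lemma norm_star_dotProduct_mul_diagonal_mulVec_le (G : Matrix ι ι ℂ) {r : ι → ℝ} (hr : 0 ≤ r)
    (ξ η : ι → ℂ) :
    ‖star ξ ⬝ᵥ ((G * diagonal (RCLike.ofReal ∘ r)) *ᵥ η)‖ ≤
      (∑ i, r i * ‖(Gᴴ *ᵥ ξ) i‖ ^ 2 + ∑ i, r i * ‖η i‖ ^ 2) / 2 := by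
  rw [← mulVec_mulVec, dotProduct_mulVec, ← conjTranspose_conjTranspose G,
    ← star_mulVec, conjTranspose_conjTranspose, ← Finset.sum_add_distrib, Finset.sum_div]
  refine (norm_sum_le _ _).trans (Finset.sum_le_sum fun i _ => ?_)
  simp only [mulVec_diagonal, Function.comp_apply, Pi.star_apply, norm_mul, norm_star,
    RCLike.norm_ofReal, abs_of_nonneg (hr i)]
  nlinarith [mul_le_mul_of_nonneg_left (two_mul_le_add_sq ‖(Gᴴ *ᵥ ξ) i‖ ‖η i‖) (hr i)]

lemma norm_toEuclideanCLM_unitary_mul_mul_star {𝕜 : Type*} [RCLike 𝕜] {U V : Matrix ι ι 𝕜}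
    (hU : U ∈ unitary (Matrix ι ι 𝕜)) (hV : V ∈ unitary (Matrix ι ι 𝕜)) (M : Matrix ι ι 𝕜) :
    ‖toEuclideanCLM (𝕜 := 𝕜) (U * M * star V)‖ = ‖toEuclideanCLM (𝕜 := 𝕜) M‖ := by
  rw [map_mul, map_mul, CStarRing.norm_mul_mem_unitary _ (Unitary.map_mem _ (Unitary.star_mem hV)),
    CStarRing.norm_mem_unitary_mul _ (Unitary.map_mem _ hU)]

lemma sum_mul_norm_sq_le_of_posSemidef {V W : Matrix ι ι ℂ} (hW : W ∈ unitary (Matrix ι ι ℂ))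
    {r s : ι → ℝ} {lam : ℝ}
    (h : ((lam : ℂ) • (W * diagonal (RCLike.ofReal ∘ s) * star W) -
      V * diagonal (RCLike.ofReal ∘ r) * star V).PosSemidef) (ξ : ι → ℂ) :
    ∑ i, r i * ‖((star W * V)ᴴ *ᵥ ξ) i‖ ^ 2 ≤ lam * ∑ j, s j * ‖ξ j‖ ^ 2 := by
  have hξ := h.dotProduct_mulVec_nonneg (W *ᵥ ξ)
  rw [sub_mulVec, smul_mulVec, dotProduct_sub, dotProduct_smul,
    star_dotProduct_conj_diagonal_mulVec, star_dotProduct_conj_diagonal_mulVec, mulVec_mulVec,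
    mulVec_mulVec, Unitary.star_mul_self_of_mem hW, one_mulVec, smul_eq_mul, ← Complex.ofReal_mul,
    ← Complex.ofReal_sub, Complex.zero_le_real, sub_nonneg] at hξ
  rwa [← star_eq_conjTranspose, star_mul, star_star]

lemma sylvester_eq_conj_unitary {V W : Matrix ι ι ℂ} (hV : V ∈ unitary (Matrix ι ι ℂ))
    (hW : W ∈ unitary (Matrix ι ι ℂ)) {a b : ℂ} {Dr Ds M : Matrix ι ι ℂ}
    (h : a • (M * Dr) + b • (Ds * M) = star W * V * Dr) :
    a • ((W * M * star V) * (V * Dr * star V)) + b • ((W * Ds * star W) * (W * M * star V)) =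
      V * Dr * star V := by
  calc _ = W * (a • (M * Dr) + b • (Ds * M)) * star V := by
        simp only [Matrix.mul_assoc, ← Matrix.mul_assoc (star V) V, ← Matrix.mul_assoc (star W) W,
          Unitary.star_mul_self_of_mem hV, Unitary.star_mul_self_of_mem hW, Matrix.one_mul,
          Matrix.mul_add, Matrix.add_mul, Matrix.mul_smul, Matrix.smul_mul]
    _ = _ := by
        rw [h, ← Matrix.mul_assoc, ← Matrix.mul_assoc, Unitary.mul_star_self_of_mem hW,
          Matrix.one_mul]

/-- Where `α * r i + β * s j = 0` we also have `r i = 0`, so Lean's `r i / 0 = 0` is the value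
that solves the equation. -/
noncomputable def sylvesterSolution (α β : ℝ) (r s : ι → ℝ) (G : Matrix ι ι ℂ) :
    Matrix ι ι ℂ :=
  of fun j i => G j i * ((r i / (α * r i + β * s j) : ℝ) : ℂ)

variable {α β : ℝ} {r s : ι → ℝ}

lemma sylvesterSolution_spec (hα : 0 < α) (hβ : 0 ≤ β) (hr : 0 ≤ r) (hs : 0 ≤ s)
    (G : Matrix ι ι ℂ) :
    (α : ℂ) • (sylvesterSolution α β r s G * diagonal (RCLike.ofReal ∘ r)) +
        (β : ℂ) • (diagonal (RCLike.ofReal ∘ s) * sylvesterSolution α β r s G) =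
      G * diagonal (RCLike.ofReal ∘ r) := by
  ext j i
  have key : ((r i / (α * r i + β * s j) : ℝ) : ℂ) * (α * r i + β * s j) = r i := by
    refine mod_cast div_mul_cancel_of_imp fun h => ?_
    exact (mul_add_mul_pos_or_eq_zero hα hβ (hr i) (hs j)).resolve_left h.not_gt
  simp only [sylvesterSolution, Matrix.add_apply, Matrix.smul_apply, mul_diagonal, diagonal_mul,
    of_apply, Function.comp_apply, smul_eq_mul]
  linear_combination G j i * key

lemma star_dotProduct_sylvesterSolution_mulVec_eq_integral (hα : 0 < α) (hβ : 0 ≤ β)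
    (hr : 0 ≤ r) (hs : 0 ≤ s) (G : Matrix ι ι ℂ) (x y : ι → ℂ) :
    star x ⬝ᵥ (sylvesterSolution α β r s G *ᵥ y) =
      ∫ τ in Set.Ioi 0, star (fun j => (Real.exp (-(β * s j) * τ) : ℂ) * x j) ⬝ᵥ
        ((G * diagonal (RCLike.ofReal ∘ r)) *ᵥ fun i => (Real.exp (-(α * r i) * τ) : ℂ) * y i) := by
  have hrate := fun i j => mul_add_mul_pos_or_eq_zero hα hβ (hr i) (hs j)
  have hintegrand : ∀ τ : ℝ, star (fun j => (Real.exp (-(β * s j) * τ) : ℂ) * x j) ⬝ᵥ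
      ((G * diagonal (RCLike.ofReal ∘ r)) *ᵥ fun i => (Real.exp (-(α * r i) * τ) : ℂ) * y i) =
      ∑ j, ∑ i, star (x j) * G j i * y i *
        ((r i * Real.exp (-(α * r i + β * s j) * τ) : ℝ) : ℂ) := by
    intro τ
    simp only [dotProduct, mulVec, mul_diagonal, Function.comp_apply, Pi.star_apply,
      Finset.mul_sum]
    refine Finset.sum_congr rfl fun j _ => Finset.sum_congr rfl fun i _ => ?_
    rw [neg_add, add_mul, Real.exp_add]
    simp only [star_mul', RCLike.star_def, Complex.conj_ofReal, Complex.ofReal_mul,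
      Complex.coe_algebraMap]
    ring
  have hint : ∀ j i, IntegrableOn (fun τ : ℝ => star (x j) * G j i * y i *
      ((r i * Real.exp (-(α * r i + β * s j) * τ) : ℝ) : ℂ)) (Set.Ioi 0) := fun j i =>
    ((integrableOn_mul_exp_neg_mul (hrate i j)).ofReal).const_mul _
  simp only [hintegrand]
  rw [integral_finsetSum _ fun j _ => integrable_finsetSum _ fun i _ => hint j i]
  simp only [dotProduct, mulVec, sylvesterSolution, of_apply, Pi.star_apply, Finset.mul_sum]
  refine Finset.sum_congr rfl fun j _ => ?_
  rw [integral_finsetSum _ fun i _ => hint j i]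
  refine Finset.sum_congr rfl fun i _ => ?_
  rw [integral_const_mul, integral_complex_ofReal, integral_mul_exp_neg_mul (hrate i j)]
  ring

lemma norm_star_dotProduct_sylvesterSolution_mulVec_le (hα : 0 < α) (hβ : 0 < β) (hr : 0 ≤ r)
    (hs : 0 ≤ s) {lam : ℝ} (hlam : 0 ≤ lam) {G : Matrix ι ι ℂ}
    (hdom : ∀ ξ : ι → ℂ, ∑ i, r i * ‖(Gᴴ *ᵥ ξ) i‖ ^ 2 ≤ lam * ∑ j, s j * ‖ξ j‖ ^ 2)
    (x y : ι → ℂ) :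
    ‖star x ⬝ᵥ (sylvesterSolution α β r s G *ᵥ y)‖ ≤
      (lam * ((∑ j, ‖x j‖ ^ 2) / (2 * β)) + (∑ i, ‖y i‖ ^ 2) / (2 * α)) / 2 := by
  obtain ⟨hPint, hP⟩ := integrableOn_sum_mul_exp_neg_and_integral_le (w := fun j => ‖x j‖ ^ 2)
    (c := s) (fun j => by positivity) hs (by positivity : 0 < 2 * β)
  obtain ⟨hQint, hQ⟩ := integrableOn_sum_mul_exp_neg_and_integral_le (w := fun i => ‖y i‖ ^ 2)
    (c := r) (fun i => by positivity) hr (by positivity : 0 < 2 * α)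
  set P := fun τ : ℝ => ∑ j, ‖x j‖ ^ 2 * (s j * Real.exp (-(2 * β * s j) * τ))
  set Q := fun τ : ℝ => ∑ i, ‖y i‖ ^ 2 * (r i * Real.exp (-(2 * α * r i) * τ))
  have hpointwise : ∀ τ : ℝ, ‖star (fun j => (Real.exp (-(β * s j) * τ) : ℂ) * x j) ⬝ᵥ
      ((G * diagonal (RCLike.ofReal ∘ r)) *ᵥ fun i => (Real.exp (-(α * r i) * τ) : ℂ) * y i)‖ ≤
      (lam * P τ + Q τ) / 2 := by
    intro τ
    refine (norm_star_dotProduct_mul_diagonal_mulVec_le G hr _ _).trans ?_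
    gcongr
    · refine (hdom _).trans_eq (congrArg (lam * ·) (Finset.sum_congr rfl fun j _ => ?_))
      rw [norm_ofReal_exp_mul_sq]
      ring_nf
    · refine (Finset.sum_congr rfl fun i _ => ?_).le
      rw [norm_ofReal_exp_mul_sq]
      ring_nf
  rw [star_dotProduct_sylvesterSolution_mulVec_eq_integral hα hβ.le hr hs]
  calc _ ≤ ∫ τ in Set.Ioi 0, (lam * P τ + Q τ) / 2 :=
        norm_integral_le_of_norm_le (((hPint.const_mul lam).add hQint).div_const 2)
          (ae_of_all _ hpointwise)
    _ = (lam * (∫ τ in Set.Ioi 0, P τ) + ∫ τ in Set.Ioi 0, Q τ) / 2 := by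
        rw [integral_div, integral_add (hPint.const_mul lam) hQint, integral_const_mul]
    _ ≤ _ := by gcongr

theorem norm_toEuclideanCLM_sylvesterSolution_le (hα : 0 < α) (hβ : 0 < β) (hr : 0 ≤ r)
    (hs : 0 ≤ s) {lam : ℝ} (hlam : 0 ≤ lam) {G : Matrix ι ι ℂ}
    (hdom : ∀ ξ : ι → ℂ, ∑ i, r i * ‖(Gᴴ *ᵥ ξ) i‖ ^ 2 ≤ lam * ∑ j, s j * ‖ξ j‖ ^ 2) :
    ‖toEuclideanCLM (𝕜 := ℂ) (sylvesterSolution α β r s G)‖ ≤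
      max (1 / (2 * α)) (lam / (2 * β)) := by
  refine ContinuousLinearMap.opNorm_le_of_norm_inner_le _ (lt_max_of_lt_left (by positivity))
    fun x y => ?_
  rw [EuclideanSpace.inner_eq_star_dotProduct, ofLp_toEuclideanCLM, dotProduct_comm,
    EuclideanSpace.norm_sq_eq, EuclideanSpace.norm_sq_eq]
  refine (norm_star_dotProduct_sylvesterSolution_mulVec_le hα hβ hr hs hlam hdom _ _).trans ?_
  have hx := mul_le_mul_of_nonneg_right (le_max_right (1 / (2 * α)) (lam / (2 * β)))
    (by positivity : 0 ≤ ∑ j, ‖x j‖ ^ 2)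
  have hy := mul_le_mul_of_nonneg_right (le_max_left (1 / (2 * α)) (lam / (2 * β)))
    (by positivity : 0 ≤ ∑ i, ‖y i‖ ^ 2)
  linear_combination (hx + hy) / 2

end Matrix

theorem stmt_9 {n : ℕ} (t lam : ℝ) (ht : t ∈ Set.Ioo (0:ℝ) 1) (hlam : 0 ≤ lam)
    (ρ σ : Matrix (Fin n) (Fin n) ℂ) (hρ : ρ.PosSemidef) (hσ : σ.PosSemidef)
    (hle : ((lam : ℂ) • σ - ρ).PosSemidef) :
    ∃ Z : Matrix (Fin n) (Fin n) ℂ,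
      ((1 - t : ℝ) : ℂ) • (Z * ρ) + (t : ℂ) • (σ * Z) = ρ ∧
      ‖Matrix.toEuclideanCLM (𝕜 := ℂ) Z‖ ≤ max (3 / (2 * (1 - t))) (3 * lam / (2 * t)) := by
  obtain ⟨ht0, ht1⟩ := ht
  have h1t : 0 < 1 - t := sub_pos.mpr ht1
  have hV := hρ.1.eigenvectorUnitary.2
  have hW := hσ.1.eigenvectorUnitary.2
  set V := (hρ.1.eigenvectorUnitary : Matrix (Fin n) (Fin n) ℂ)
  set W := (hσ.1.eigenvectorUnitary : Matrix (Fin n) (Fin n) ℂ)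
  have hρV : ρ = V * diagonal (RCLike.ofReal ∘ hρ.1.eigenvalues) * star V := hρ.1.spectral_theorem
  have hσW : σ = W * diagonal (RCLike.ofReal ∘ hσ.1.eigenvalues) * star W := hσ.1.spectral_theorem
  set M := sylvesterSolution (1 - t) t hρ.1.eigenvalues hσ.1.eigenvalues (star W * V)
  refine ⟨W * M * star V, ?_, ?_⟩
  · rw [hσW, hρV]
    exact sylvester_eq_conj_unitary hV hW
      (sylvesterSolution_spec h1t ht0.le hρ.eigenvalues_nonneg hσ.eigenvalues_nonneg _)
  · rw [hσW, hρV] at hle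
    calc _ = ‖toEuclideanCLM (𝕜 := ℂ) M‖ := norm_toEuclideanCLM_unitary_mul_mul_star hW hV M
      _ ≤ max (1 / (2 * (1 - t))) (lam / (2 * t)) :=
          norm_toEuclideanCLM_sylvesterSolution_le h1t ht0 hρ.eigenvalues_nonneg
            hσ.eigenvalues_nonneg hlam (sum_mul_norm_sq_le_of_posSemidef hW hle)
      _ ≤ _ := by gcongr <;> linarith
end

section
/- Let t ∈ (0,1), λ ≥ 0, and set α = max(3/(2(1-t)), 3λ/(2t)). For positive semidefinite matrices ρ, σ on H define X = diag((1-t)ρ, tσ) and K = (1/2)[[ρ, ρ],[ρ, λσ]] as block operators on H ⊕ H. If ρ ≤ λσ, then both X and K are positive semidefinite and αX − K ≥ 0. -/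
open Matrix ComplexOrder

/-!
`X` is block diagonal with positive semidefinite blocks, and
`2K = [[ρ, ρ], [ρ, ρ]] + diag(0, λσ − ρ)`, where `[[ρ, ±ρ], [±ρ, ρ]] = B ρ Bᴴ` for `B = [I; ±I]`.
Likewise `αX − K = ½ [[ρ, −ρ], [−ρ, ρ]] + diag((α(1−t) − 1) ρ, (αt − λ) σ + ½ (λσ − ρ))`,
whose coefficients are nonnegative because `α(1−t) ≥ 3/2` and `αt ≥ 3λ/2 ≥ λ`.
-/

namespace Matrix.PosSemidef

variable {R m n₁ n₂ : Type*} [Ring R] [PartialOrder R] [StarRing R]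
  [Fintype m] [Fintype n₁] [Fintype n₂]

lemma fromBlocks_mul_mul_conjTranspose {A : Matrix m m R} (hA : A.PosSemidef)
    (B₁ : Matrix n₁ m R) (B₂ : Matrix n₂ m R) :
    (fromBlocks (B₁ * A * B₁ᴴ) (B₁ * A * B₂ᴴ) (B₂ * A * B₁ᴴ) (B₂ * A * B₂ᴴ)).PosSemidef := by
  have h := hA.mul_mul_conjTranspose_same (fromRows B₁ B₂)
  rwa [fromRows_mul, conjTranspose_fromRows_eq_fromCols_conjTranspose,
    fromRows_mul_fromCols] at h

lemma fromBlocks_zero₁₂_zero₂₁ [AddLeftMono R] [DecidableEq n₁] [DecidableEq n₂]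
    {A : Matrix n₁ n₁ R} {D : Matrix n₂ n₂ R} (hA : A.PosSemidef) (hD : D.PosSemidef) :
    (fromBlocks A 0 0 D).PosSemidef := by
  have h := (hA.fromBlocks_mul_mul_conjTranspose 1 (0 : Matrix n₂ n₁ R)).add
    (hD.fromBlocks_mul_mul_conjTranspose (0 : Matrix n₁ n₂ R) 1)
  simpa [fromBlocks_add] using h

variable [DecidableEq m] {A : Matrix m m R} (hA : A.PosSemidef)
include hA

lemma fromBlocks_self : (fromBlocks A A A A).PosSemidef := by
  simpa using hA.fromBlocks_mul_mul_conjTranspose (n₁ := m) (n₂ := m) 1 1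

lemma fromBlocks_neg_self : (fromBlocks A (-A) (-A) A).PosSemidef := by
  simpa using hA.fromBlocks_mul_mul_conjTranspose (n₁ := m) (n₂ := m) 1 (-1)

end Matrix.PosSemidef

theorem stmt_10 {m : ℕ} (t lam : ℝ) (ht : t ∈ Set.Ioo (0:ℝ) 1) (hlam : 0 ≤ lam)
    (ρ σ : Matrix (Fin m) (Fin m) ℂ) (hρ : ρ.PosSemidef) (hσ : σ.PosSemidef)
    (hle : ((lam : ℂ) • σ - ρ).PosSemidef) :
    (Matrix.fromBlocks (((1 - t : ℝ) : ℂ) • ρ) 0 0 ((t : ℂ) • σ)).PosSemidef ∧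
    ((1 / 2 : ℂ) • Matrix.fromBlocks ρ ρ ρ ((lam : ℂ) • σ)).PosSemidef ∧
    (((max (3 / (2 * (1 - t))) (3 * lam / (2 * t)) : ℝ) : ℂ) •
        Matrix.fromBlocks (((1 - t : ℝ) : ℂ) • ρ) 0 0 ((t : ℂ) • σ)
      - (1 / 2 : ℂ) • Matrix.fromBlocks ρ ρ ρ ((lam : ℂ) • σ)).PosSemidef := by
  obtain ⟨ht0, ht1⟩ := ht
  set α := max (3 / (2 * (1 - t))) (3 * lam / (2 * t))
  have hα₁ : 1 ≤ α * (1 - t) := by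
    have := (div_le_iff₀ (by linarith)).1 (le_max_left _ _ : 3 / (2 * (1 - t)) ≤ α)
    linarith
  have hα₂ : lam ≤ α * t := by
    have := (div_le_iff₀ (by linarith)).1 (le_max_right _ _ : 3 * lam / (2 * t) ≤ α)
    linarith
  have hreal {r : ℝ} (hr : 0 ≤ r) : (0 : ℂ) ≤ r := Complex.zero_le_real.2 hr
  have hhalf : (0 : ℂ) ≤ 1 / 2 := by positivity
  refine ⟨(hρ.smul (hreal (by linarith))).fromBlocks_zero₁₂_zero₂₁ (hσ.smul (hreal ht0.le)),
    ?_, ?_⟩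
  · have hK : fromBlocks ρ ρ ρ ((lam : ℂ) • σ)
        = fromBlocks ρ ρ ρ ρ + fromBlocks 0 0 0 ((lam : ℂ) • σ - ρ) := by
      simp [fromBlocks_add]
    rw [hK]
    exact (hρ.fromBlocks_self.add (PosSemidef.zero.fromBlocks_zero₁₂_zero₂₁ hle)).smul hhalf
  · have hdecomp : (α : ℂ) • fromBlocks (((1 - t : ℝ) : ℂ) • ρ) 0 0 ((t : ℂ) • σ)
          - (1 / 2 : ℂ) • fromBlocks ρ ρ ρ ((lam : ℂ) • σ)
        = (1 / 2 : ℂ) • fromBlocks ρ (-ρ) (-ρ) ρ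
          + fromBlocks (((α * (1 - t) - 1 : ℝ) : ℂ) • ρ) 0 0
            (((α * t - lam : ℝ) : ℂ) • σ + (1 / 2 : ℂ) • ((lam : ℂ) • σ - ρ)) := by
      ext (i | i) (j | j) <;> simp <;> ring
    rw [hdecomp]
    exact (hρ.fromBlocks_neg_self.smul hhalf).add
      ((hρ.smul (hreal (by linarith))).fromBlocks_zero₁₂_zero₂₁
        ((hσ.smul (hreal (by linarith))).add (hle.smul hhalf)))
end

section
/- Let ρ, σ be positive definite matrices on a finite-dimensional Hilbert space H, and for t ∈ (0,1] define φ(a) = Tr(ρ) + Tr(ρ(a + a*)) + (1−t)Tr(ρ a* a) + t Tr(σ a a*) for a ∈ B(H). Then φ is convex, and a₀ ∈ B(H) achieves the infimum of φ if and only if ρ + (1−t) a₀ ρ + t σ a₀ = 0. -/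
/-!
Along every line, `φ(a + s b) = φ(a) + 2 s Re Tr(M(a) b*) + s² q(b)` with
`M(a) = ρ + (1 - t) a ρ + t σ a` and `q(b) = (1 - t) Tr(b ρ b*) + t Tr(b* σ b) ≥ 0`.
A nonnegative quadratic term makes `φ` convex, and `a₀` is a minimiser exactly when the linear
term vanishes for every `b`; taking `b = M(a₀)` turns this into `Tr(M M*) = 0`, i.e. `M(a₀) = 0`.
-/

open Matrix ComplexOrder

section QuadraticExpansion

variable {E : Type*} [AddCommGroup E] [Module ℝ E] {f : E → ℝ} {L : E → E → ℝ} {q : E → ℝ}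

theorem convexOn_univ_of_quadratic_expansion
    (hf : ∀ a b (s : ℝ), f (a + s • b) = f a + s * L a b + s ^ 2 * q b) (hq : ∀ b, 0 ≤ q b) :
    ConvexOn ℝ Set.univ f := by
  refine ⟨convex_univ, fun x _ y _ l m hl hm hlm => ?_⟩
  obtain rfl : m = 1 - l := by linarith
  set c := l • x + (1 - l) • y
  have hx : f x = f c + (1 - l) * L c (x - y) + (1 - l) ^ 2 * q (x - y) := by
    rw [← hf]; congr 1; module
  have hy : f y = f c + (-l) * L c (x - y) + (-l) ^ 2 * q (x - y) := by
    rw [← hf]; congr 1; module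
  simp only [smul_eq_mul, hx, hy]
  linear_combination mul_nonneg (mul_nonneg hl hm) (hq (x - y))

theorem forall_le_iff_of_quadratic_expansion
    (hf : ∀ a b (s : ℝ), f (a + s • b) = f a + s * L a b + s ^ 2 * q b) (hq : ∀ b, 0 ≤ q b)
    (a : E) : (∀ b, f a ≤ f b) ↔ ∀ b, L a b = 0 := by
  constructor
  · intro hmin b
    have hdiscrim : discrim (q b) (L a b) 0 ≤ 0 := discrim_le_zero fun s => by
      have := hmin (a + s • b)
      rw [hf] at this
      linarith
    rw [discrim] at hdiscrim
    nlinarith [sq_nonneg (L a b)]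
  · intro hcrit b
    have := hf a (b - a) 1
    rw [one_smul, add_sub_cancel, hcrit] at this
    linarith [hq (b - a)]

end QuadraticExpansion

section TraceFunctional

variable {ι : Type*} [Fintype ι]

noncomputable def phi (t : ℝ) (ρ σ a : Matrix ι ι ℂ) : ℝ :=
  (ρ.trace + (ρ * (a + aᴴ)).trace + ((1 - t : ℝ) : ℂ) * (ρ * aᴴ * a).trace
    + (t : ℂ) * (σ * a * aᴴ).trace).re

noncomputable def phiGrad (t : ℝ) (ρ σ a : Matrix ι ι ℂ) : Matrix ι ι ℂ :=
  ρ + ((1 - t : ℝ) : ℂ) • (a * ρ) + (t : ℂ) • (σ * a)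

noncomputable def phiQuad (t : ℝ) (ρ σ b : Matrix ι ι ℂ) : ℝ :=
  (((1 - t : ℝ) : ℂ) * (ρ * bᴴ * b).trace + (t : ℂ) * (σ * b * bᴴ).trace).re

theorem phiQuad_nonneg {t : ℝ} (ht₀ : 0 ≤ t) (ht₁ : t ≤ 1) {ρ σ : Matrix ι ι ℂ}
    (hρ : ρ.PosSemidef) (hσ : σ.PosSemidef) (b : Matrix ι ι ℂ) : 0 ≤ phiQuad t ρ σ b := by
  have hρb : 0 ≤ (ρ * bᴴ * b).trace := by
    rw [trace_mul_cycle]; exact (hρ.mul_mul_conjTranspose_same b).trace_nonneg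
  have hσb : 0 ≤ (σ * b * bᴴ).trace := by
    rw [trace_mul_cycle]; exact (hσ.conjTranspose_mul_mul_same b).trace_nonneg
  have h1t : (0 : ℂ) ≤ ((1 - t : ℝ) : ℂ) := by exact_mod_cast sub_nonneg.mpr ht₁
  have ht : (0 : ℂ) ≤ (t : ℂ) := by exact_mod_cast ht₀
  exact (Complex.nonneg_iff.mp (add_nonneg (mul_nonneg h1t hρb) (mul_nonneg ht hσb))).1

theorem phiQuad_smul (t : ℝ) (ρ σ b : Matrix ι ι ℂ) (s : ℝ) :
    phiQuad t ρ σ (s • b) = s ^ 2 * phiQuad t ρ σ b := by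
  simp only [phiQuad, conjTranspose_smul, star_trivial, Matrix.mul_smul, Matrix.smul_mul,
    trace_smul, smul_smul, Complex.real_smul, Complex.add_re, Complex.re_ofReal_mul]
  ring

theorem phi_add {ρ σ : Matrix ι ι ℂ} (hρ : ρ.IsHermitian) (hσ : σ.IsHermitian) (t : ℝ)
    (a b : Matrix ι ι ℂ) :
    phi t ρ σ (a + b) = phi t ρ σ a + 2 * (phiGrad t ρ σ a * bᴴ).trace.re + phiQuad t ρ σ b := by
  have hgrad : (phiGrad t ρ σ a * bᴴ).trace + (phiGrad t ρ σ a * bᴴ)ᴴ.trace =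
      (ρ * (b + bᴴ)).trace + ((1 - t : ℝ) : ℂ) * ((ρ * aᴴ * b).trace + (ρ * bᴴ * a).trace)
        + (t : ℂ) * ((σ * a * bᴴ).trace + (σ * b * aᴴ).trace) := by
    simp only [phiGrad, conjTranspose_mul, conjTranspose_add, conjTranspose_smul,
      conjTranspose_conjTranspose, hρ.eq, hσ.eq, Matrix.add_mul, Matrix.mul_add,
      Matrix.smul_mul, trace_add, trace_smul, Complex.star_def, Complex.conj_ofReal, smul_eq_mul]
    rw [trace_mul_comm b ρ, trace_mul_cycle ρ aᴴ b, trace_mul_cycle ρ bᴴ a,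
      trace_mul_cycle σ a bᴴ, trace_mul_cycle σ b aᴴ, trace_mul_comm (aᴴ * σ) b,
      Matrix.mul_assoc b ρ aᴴ]
    ring
  have hre := congrArg Complex.re hgrad
  rw [Complex.add_re, trace_conjTranspose, Complex.star_def, Complex.conj_re] at hre
  simp only [phi, phiQuad, conjTranspose_add, Matrix.add_mul, Matrix.mul_add, trace_add,
    Complex.add_re, Complex.mul_re, Complex.ofReal_re, Complex.ofReal_im, zero_mul,
    sub_zero] at hre ⊢
  linear_combination -hre

theorem phi_add_smul {ρ σ : Matrix ι ι ℂ} (hρ : ρ.IsHermitian) (hσ : σ.IsHermitian) (t : ℝ)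
    (a b : Matrix ι ι ℂ) (s : ℝ) :
    phi t ρ σ (a + s • b) =
      phi t ρ σ a + s * (2 * (phiGrad t ρ σ a * bᴴ).trace.re) + s ^ 2 * phiQuad t ρ σ b := by
  rw [phi_add hρ hσ, phiQuad_smul, conjTranspose_smul, star_trivial, Matrix.mul_smul,
    trace_smul, Complex.smul_re, smul_eq_mul]
  ring

theorem forall_re_trace_mul_conjTranspose_eq_zero_iff (M : Matrix ι ι ℂ) :
    (∀ b : Matrix ι ι ℂ, (M * bᴴ).trace.re = 0) ↔ M = 0 := by
  refine ⟨fun h => ?_, fun h b => by simp [h]⟩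
  have hnonneg := Complex.nonneg_iff.mp (posSemidef_self_mul_conjTranspose M).trace_nonneg
  exact trace_mul_conjTranspose_self_eq_zero_iff.mp (Complex.ext (h M) hnonneg.2.symm)

end TraceFunctional

theorem stmt_16 {n : ℕ} (t : ℝ) (ht : t ∈ Set.Ioc (0:ℝ) 1)
    (ρ σ : Matrix (Fin n) (Fin n) ℂ) (hρ : ρ.PosDef) (hσ : σ.PosDef) :
    ConvexOn ℝ Set.univ (fun a : Matrix (Fin n) (Fin n) ℂ =>
      (ρ.trace + (ρ * (a + aᴴ)).trace + ((1 - t : ℝ) : ℂ) * (ρ * aᴴ * a).trace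
        + (t : ℂ) * (σ * a * aᴴ).trace).re) ∧
    ∀ a₀ : Matrix (Fin n) (Fin n) ℂ,
      (∀ a : Matrix (Fin n) (Fin n) ℂ,
        (ρ.trace + (ρ * (a₀ + a₀ᴴ)).trace + ((1 - t : ℝ) : ℂ) * (ρ * a₀ᴴ * a₀).trace
          + (t : ℂ) * (σ * a₀ * a₀ᴴ).trace).re ≤
        (ρ.trace + (ρ * (a + aᴴ)).trace + ((1 - t : ℝ) : ℂ) * (ρ * aᴴ * a).trace
          + (t : ℂ) * (σ * a * aᴴ).trace).re)
      ↔ ρ + ((1 - t : ℝ) : ℂ) • (a₀ * ρ) + (t : ℂ) • (σ * a₀) = 0 := by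
  have hexp := phi_add_smul hρ.isHermitian hσ.isHermitian t
  have hq := phiQuad_nonneg ht.1.le ht.2 hρ.posSemidef hσ.posSemidef
  refine ⟨convexOn_univ_of_quadratic_expansion hexp hq, fun a₀ => ?_⟩
  refine (forall_le_iff_of_quadratic_expansion hexp hq a₀).trans ?_
  simp only [mul_eq_zero, two_ne_zero, false_or]
  exact forall_re_trace_mul_conjTranspose_eq_zero_iff (phiGrad t ρ σ a₀)
end
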